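/- Let G be a group, let B ⊆ G be a nonempty finite set, let H ⊆ G be a nonempty finite set, let 0 ≤ β < 1 and 0 < ε₁ < 1, and let Q ⊆ B satisfy |Q| ≥ (1−β)|B| and H·x ⊆ B for every x ∈ Q. Then there exists a subset I ⊆ Q such that the family of right translates (H·x)_{x∈I} is ε₁-disjoint and |B ∩ ⋃_{x∈I} H·x| ≥ ε₁(1−β)|B|. -/

import Mathlib

open Pointwise Filter Topology

section Defs

variable {G : Type*} [Group G]

/-- The word ball of radius `k` with respect to the generating set `S`. -/
noncomputable def wball (S : Finset G) (k : ℕ) : Finset G :=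
  letI := Classical.decEq G
  (insert (1 : G) S) ^ k

/-- The `k`-neighborhood `B_k(F) = B_k * F` of a finite set `F`. -/
noncomputable def wnbhd (S : Finset G) (k : ℕ) (F : Finset G) : Finset G :=
  letI := Classical.decEq G
  wball S k * F

/-- The `k`-interior `Ω_k(F)` of a finite set `F`. -/
noncomputable def winter (S : Finset G) (k : ℕ) (F : Finset G) : Finset G :=
  letI := Classical.decEq G
  F.filter fun p => wball S k * {p} ⊆ F

/-- The boundary `∂F` of a finite set `F`. -/
noncomputable def wbdry (S : Finset G) (F : Finset G) : Finset G :=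
  letI := Classical.decEq G
  F.filter fun p => ∃ s ∈ S, s * p ∉ F

/-- `S` is a finite symmetric generating set. -/
def IsSymmGen (S : Finset G) : Prop :=
  (∀ s ∈ S, s⁻¹ ∈ S) ∧ Subgroup.closure (S : Set G) = ⊤

/-- A Følner exhaustion of `G`. -/
def IsFolnerExhaustion (S : Finset G) (F : ℕ → Finset G) : Prop :=
  (1 : G) ∈ F 0 ∧ Monotone F ∧ (∀ g : G, ∃ n, g ∈ F n) ∧
    Filter.Tendsto (fun n => ((wbdry S (F n)).card : ℝ) / ((F n).card : ℝ))
      Filter.atTop (nhds 0)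

variable {d : ℕ}

/-- The space of vectors supported in `Fs` such that `A.mulVec f` vanishes on `Fv`. -/
noncomputable def kerOn (A : Matrix (Fin d) (Fin d) (MonoidAlgebra ℂ G))
    (Fs Fv : Finset G) : Submodule ℂ (Fin d → MonoidAlgebra ℂ G) where
  carrier := {f | (∀ i, (f i).coeff.support ⊆ Fs) ∧ ∀ i, ∀ g ∈ Fv, (A.mulVec f i).coeff g = 0}
  zero_mem' := ⟨fun i => by simp, fun i g hg => by simp [Matrix.mulVec_zero]⟩
  add_mem' := by
    classical
    rintro f g ⟨hf1, hf2⟩ ⟨hg1, hg2⟩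
    constructor
    · intro i
      exact Finsupp.support_add.trans (Finset.union_subset (hf1 i) (hg1 i))
    · intro i x hx
      have h : A.mulVec (f + g) = A.mulVec f + A.mulVec g := Matrix.mulVec_add A f g
      rw [h]
      show (A.mulVec f i + A.mulVec g i).coeff x = 0
      rw [MonoidAlgebra.coeff_add, Finsupp.add_apply, hf2 i x hx, hg2 i x hx, add_zero]
  smul_mem' := by
    classical
    rintro c f ⟨hf1, hf2⟩
    constructor
    · intro i
      exact (Finsupp.support_smul).trans (hf1 i)
    · intro i x hx
      have h : A.mulVec (c • f) = c • A.mulVec f := Matrix.mulVec_smul A c f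
      rw [h]
      show (c • A.mulVec f i).coeff x = 0
      rw [MonoidAlgebra.coeff_smul, Finsupp.smul_apply, hf2 i x hx, smul_zero]

/-- The space of vectors supported in `Fs` with `A.mulVec f = 0`. -/
noncomputable def kerAll (A : Matrix (Fin d) (Fin d) (MonoidAlgebra ℂ G))
    (Fs : Finset G) : Submodule ℂ (Fin d → MonoidAlgebra ℂ G) where
  carrier := {f | (∀ i, (f i).coeff.support ⊆ Fs) ∧ A.mulVec f = 0}
  zero_mem' := ⟨fun i => by simp, Matrix.mulVec_zero A⟩
  add_mem' := by
    classical
    rintro f g ⟨hf1, hf2⟩ ⟨hg1, hg2⟩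
    exact ⟨fun i => Finsupp.support_add.trans (Finset.union_subset (hf1 i) (hg1 i)),
      by rw [Matrix.mulVec_add, hf2, hg2, add_zero]⟩
  smul_mem' := by
    classical
    rintro c f ⟨hf1, hf2⟩
    exact ⟨fun i => (Finsupp.support_smul).trans (hf1 i),
      by rw [Matrix.mulVec_smul, hf2, smul_zero]⟩

/-- `V(F)`. -/
noncomputable def VSpace (A : Matrix (Fin d) (Fin d) (MonoidAlgebra ℂ G)) (F : Finset G) :
    Submodule ℂ (Fin d → MonoidAlgebra ℂ G) :=
  kerOn A F F

/-- `Z(F)`. -/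
noncomputable def ZSpace (S : Finset G) (w : ℕ) (A : Matrix (Fin d) (Fin d) (MonoidAlgebra ℂ G))
    (F : Finset G) : Submodule ℂ (Fin d → MonoidAlgebra ℂ G) :=
  kerOn A (wnbhd S w F) F

/-- `W(F)`. -/
noncomputable def WSpace (S : Finset G) (w : ℕ) (A : Matrix (Fin d) (Fin d) (MonoidAlgebra ℂ G))
    (F : Finset G) : Submodule ℂ (Fin d → MonoidAlgebra ℂ G) :=
  kerAll A (winter S w F)

/-- `A.mulVec` as a `ℂ`-linear map. -/
noncomputable def mulVecL {R : Type*} [Ring R] [Algebra ℂ R] {d : ℕ}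
    (A : Matrix (Fin d) (Fin d) R) : (Fin d → R) →ₗ[ℂ] (Fin d → R) where
  toFun := A.mulVec
  map_add' := Matrix.mulVec_add A
  map_smul' c v := Matrix.mulVec_smul A c v

/-- Coordinatewise restriction to `F` (multiplication by the indicator of `F`). -/
noncomputable def restrictTo (d : ℕ) (F : Finset G) :
    (Fin d → MonoidAlgebra ℂ G) →ₗ[ℂ] (Fin d → MonoidAlgebra ℂ G) :=
  letI := Classical.decEq G
  { toFun := fun f i => MonoidAlgebra.ofCoeff ((f i).coeff.filter (· ∈ F))
    map_add' := fun f g => by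
      funext i
      exact congrArg MonoidAlgebra.ofCoeff Finsupp.filter_add
    map_smul' := fun c f => by
      funext i
      exact congrArg MonoidAlgebra.ofCoeff Finsupp.filter_smul }

end Defs

section Tiling

variable {ι α : Type*}

/-- An `ε`-disjoint family of finite sets. -/
def EpsDisjoint (I : Finset ι) (A : ι → Finset α) (ε : ℝ) : Prop :=
  ∃ Ab : ι → Finset α, (∀ i ∈ I, Ab i ⊆ A i) ∧
    (∀ i ∈ I, ((1 - ε) * (A i).card : ℝ) ≤ ((Ab i).card : ℝ)) ∧
    ∀ i ∈ I, ∀ j ∈ I, i ≠ j → Disjoint (Ab i) (Ab j)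

/-- The family `(A i)_{i ∈ I}` `a`-covers `X`. -/
def CoversFrac (I : Finset ι) (A : ι → Finset α) (X : Finset α) (a : ℝ) : Prop :=
  letI := Classical.decEq α
  (a * X.card : ℝ) ≤ ((X ∩ I.biUnion A).card : ℝ)

/-- The family `(A i)_{i ∈ I}` `δ`-evenly covers `X`. -/
def EvenCovering (I : Finset ι) (A : ι → Finset α) (X : Finset α) (δ : ℝ) : Prop :=
  letI := Classical.decEq α
  ∃ M : ℕ, 1 ≤ M ∧ (∀ p ∈ X, (I.filter fun i => p ∈ A i).card ≤ M) ∧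
    ((1 - δ) * M * X.card : ℝ) ≤ ∑ i ∈ I, ((A i).card : ℝ)

/-- The right translate `H·x`. -/
noncomputable def rtrans [Mul α] (H : Finset α) (x : α) : Finset α :=
  letI := Classical.decEq α
  H.image (· * x)

end Tiling

section Supp

variable {G : Type*} [Group G]

/-- Vectors all of whose coordinates are supported in `F`. -/
noncomputable def suppIn (d : ℕ) (F : Finset G) :
    Submodule ℂ (Fin d → MonoidAlgebra ℂ G) where
  carrier := {f | ∀ i, (f i).coeff.support ⊆ F}
  zero_mem' := fun i => by simp
  add_mem' := by
    classical
    intro f g hf hg i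
    exact Finsupp.support_add.trans (Finset.union_subset (hf i) (hg i))
  smul_mem' := fun c f hf i => (Finsupp.support_smul).trans (hf i)

end Supp

/-
Take a subfamily `I ⊆ Q` of maximal size among those whose translates are `ε₁`-disjoint, and let
`U = ⋃_{x ∈ I} H·x ⊆ B`. By maximality every `H·x` with `x ∈ Q` meets `U` in at least `ε₁|H|`
points, since otherwise `H·x \ U` could serve as the disjointified part of a new member.
A point lies in at most `|H|` translates `H·x`, so double counting the incidences between `Q`
and `U` gives `ε₁|H||Q| ≤ |H||U|`, i.e. `|U| ≥ ε₁|Q| ≥ ε₁(1-β)|B|`.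
-/

open Finset

section EpsDisjoint

variable {ι α : Type*} {A : ι → Finset α} {ε : ℝ}

lemma epsDisjoint_empty : EpsDisjoint ∅ A ε :=
  ⟨fun _ => ∅, by simp, by simp, by simp⟩

variable [DecidableEq ι] [DecidableEq α]

lemma EpsDisjoint.insert {I : Finset ι} {i : ι} (hI : EpsDisjoint I A ε) (hi : i ∉ I)
    (hnew : (1 - ε) * #(A i) ≤ #(A i \ I.biUnion A)) :
    EpsDisjoint (insert i I) A ε := by
  obtain ⟨Ab, hsub, hcard, hdisj⟩ := hI
  have hne : ∀ j ∈ I, j ≠ i := fun j hj h => hi (h ▸ hj)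
  have hAbU : ∀ j ∈ I, Ab j ⊆ I.biUnion A := fun j hj =>
    (hsub j hj).trans (subset_biUnion_of_mem A hj)
  refine ⟨Function.update Ab i (A i \ I.biUnion A), ?_, ?_, ?_⟩
  · intro j hj
    rcases mem_insert.1 hj with rfl | hj
    · simp
    · simpa [Function.update_of_ne (hne j hj)] using hsub j hj
  · intro j hj
    rcases mem_insert.1 hj with rfl | hj
    · simpa using hnew
    · simpa [Function.update_of_ne (hne j hj)] using hcard j hj
  · intro j hj k hk hjk
    rcases mem_insert.1 hj with rfl | hjI
    · have hkI : k ∈ I := (mem_insert.1 hk).resolve_left hjk.symm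
      simpa [Function.update_of_ne (hne k hkI)] using sdiff_disjoint.mono_right (hAbU k hkI)
    rcases mem_insert.1 hk with rfl | hkI
    · simpa [Function.update_of_ne (hne j hjI)] using
        (sdiff_disjoint.mono_right (hAbU j hjI)).symm
    · simpa [Function.update_of_ne (hne j hjI), Function.update_of_ne (hne k hkI)] using
        hdisj j hjI k hkI hjk

lemma exists_epsDisjoint_forall_le_card_inter_biUnion (Q : Finset ι) (hε : ε ≤ 1) :
    ∃ I ⊆ Q, EpsDisjoint I A ε ∧ ∀ i ∈ Q, ε * #(A i) ≤ #(A i ∩ I.biUnion A) := by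
  classical
  obtain ⟨I, hI, hmax⟩ := exists_max_image {I ∈ Q.powerset | EpsDisjoint I A ε} card
    ⟨∅, by simpa using epsDisjoint_empty⟩
  simp only [mem_filter, mem_powerset] at hI hmax
  obtain ⟨hIQ, hIdisj⟩ := hI
  refine ⟨I, hIQ, hIdisj, fun i hiQ => ?_⟩
  by_cases hiI : i ∈ I
  · rw [inter_eq_left.2 (subset_biUnion_of_mem A hiI)]
    nlinarith [(#(A i)).cast_nonneg (α := ℝ)]
  by_contra! hsmall
  have hsplit : (#(A i \ I.biUnion A) : ℝ) + #(A i ∩ I.biUnion A) = #(A i) := by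
    exact_mod_cast card_sdiff_add_card_inter _ _
  have hins := hmax _ ⟨insert_subset hiQ hIQ, hIdisj.insert hiI (by linarith)⟩
  rw [card_insert_of_notMem hiI] at hins
  omega

end EpsDisjoint

section Translates

variable {G : Type*}

lemma card_rtrans [Mul G] [IsRightCancelMul G] (H : Finset G) (x : G) : #(rtrans H x) = #H := by
  classical exact card_image_of_injective H (mul_left_injective x)

variable [Group G] [DecidableEq G]

lemma card_filter_mem_rtrans_le (H Q : Finset G) (u : G) : #{x ∈ Q | u ∈ rtrans H x} ≤ #H := by
  refine (card_le_card fun x hx => ?_).trans (card_image_le (f := fun h => h⁻¹ * u))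
  have hux : u * x⁻¹ ∈ H := by simpa [rtrans] using (mem_filter.1 hx).2
  exact mem_image.2 ⟨u * x⁻¹, hux, by group⟩

lemma mul_card_le_card_of_forall_le_card_rtrans_inter {H Q U : Finset G} {c : ℝ}
    (hH : H.Nonempty) (hc : ∀ x ∈ Q, c * #H ≤ #(rtrans H x ∩ U)) : c * #Q ≤ #U := by
  have hcount : #Q • (c * #H) ≤ #U • (#H : ℝ) :=
    card_nsmul_le_card_nsmul (fun x u => u ∈ rtrans H x)
      (fun x hx => by simpa [bipartiteAbove, filter_mem_eq_inter, inter_comm] using hc x hx)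
      (fun u _ => by exact_mod_cast card_filter_mem_rtrans_le H Q u)
  have hH0 : (0 : ℝ) < #H := by exact_mod_cast hH.card_pos
  rw [nsmul_eq_mul, nsmul_eq_mul, ← mul_assoc, mul_comm (#Q : ℝ)] at hcount
  exact le_of_mul_le_mul_right hcount hH0

end Translates

theorem translates_quasi_cover_general {G : Type*} [Group G] (B H : Finset G)
    (hH : H.Nonempty) (β ε₁ : ℝ) (hε0 : 0 < ε₁) (hε1 : ε₁ < 1)
    (Q : Finset G) (hQcard : ((1 - β) * B.card : ℝ) ≤ (Q.card : ℝ))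
    (htile : ∀ x ∈ Q, rtrans H x ⊆ B) :
    ∃ I ⊆ Q, EpsDisjoint I (fun x => rtrans H x) ε₁ ∧
      CoversFrac I (fun x => rtrans H x) B (ε₁ * (1 - β)) := by
  classical
  obtain ⟨I, hIQ, hdisj, hmeet⟩ :=
    exists_epsDisjoint_forall_le_card_inter_biUnion (A := rtrans H) Q hε1.le
  have hUB : I.biUnion (rtrans H) ⊆ B := biUnion_subset.2 fun x hx => htile x (hIQ hx)
  have hQU : ε₁ * #Q ≤ #(I.biUnion (rtrans H)) :=
    mul_card_le_card_of_forall_le_card_rtrans_inter hH fun x hx => by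
      simpa [card_rtrans] using hmeet x hx
  refine ⟨I, hIQ, hdisj, ?_⟩
  show _ ≤ (#(B ∩ I.biUnion (rtrans H)) : ℝ)
  calc ε₁ * (1 - β) * #B = ε₁ * ((1 - β) * #B) := mul_assoc _ _ _
    _ ≤ ε₁ * #Q := mul_le_mul_of_nonneg_left hQcard hε0.le
    _ ≤ #(B ∩ I.biUnion (rtrans H)) := by rwa [inter_eq_right.2 hUB]

theorem translates_quasi_cover {G : Type*} [Group G] (B H : Finset G) (hB : B.Nonempty)
    (hH : H.Nonempty) (β ε₁ : ℝ) (hβ0 : 0 ≤ β) (hβ1 : β < 1) (hε0 : 0 < ε₁) (hε1 : ε₁ < 1)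
    (Q : Finset G) (hQB : Q ⊆ B) (hQcard : ((1 - β) * B.card : ℝ) ≤ (Q.card : ℝ))
    (htile : ∀ x ∈ Q, rtrans H x ⊆ B) :
    ∃ I ⊆ Q, EpsDisjoint I (fun x => rtrans H x) ε₁ ∧
      CoversFrac I (fun x => rtrans H x) B (ε₁ * (1 - β)) :=
  translates_quasi_cover_general B H hH β ε₁ hε0 hε1 Q hQcard htile
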